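/- Let K be Stonian and let the Boolean algebra B of idempotents in C(K) be Bade complete on a Banach C(K)-module X. Then for every x ∈ X and x' ∈ X', the functional μ(a) = x'(m(a)x) on C(K), when positive, is order continuous; in particular μ vanishes on every closed nowhere dense subset of K (viewing μ as a regular Borel measure). -/

import Mathlib

open Filter Topology

/-- The Boolean algebra of idempotents of `C(K)` is Bade complete on `X`. -/
def BadeComplete {K X : Type*} [TopologicalSpace K] [CompactSpace K] [T2Space K]
    [NormedAddCommGroup X] [NormedSpace ℝ X] [CompleteSpace X]
    (m : C(K, ℝ) →ₐ[ℝ] (X →L[ℝ] X)) : Prop :=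
  ∀ S : Set C(K, ℝ), (∀ e ∈ S, e * e = e) → S.Nonempty → DirectedOn (· ≤ ·) S →
    ∀ E : C(K, ℝ), E * E = E → IsLUB S E →
      ∀ x : X, Filter.Tendsto (fun e : S => m (e : C(K, ℝ)) x) Filter.atTop (nhds (m E x))

/-!
In a Stonian space the interior of a closed set is clopen.
Let `φ a = x'(m a x)` and let `b` be the supremum of a directed set `S`. For `δ > 0` the clopen
sets `V a = interior {b - a ≤ δ}`, `a ∈ S`, increase with `a` and have dense union: otherwise
some nonempty clopen `W` would lie in every `{b - a ≥ δ}`, and `b - δ • 1_W` would be a smaller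
upper bound of `S`. So the idempotents `1_{V a}` increase to `1`, and Bade completeness gives
`φ 1_{V a} → φ 1`. Since `b - a ≤ δ + ‖b - a₀‖ • 1_{(V a)ᶜ}` for `a ≥ a₀`, this forces
`φ a → φ b`. For a closed nowhere dense `D`, the clopen sets disjoint from `D` have dense union,
so order continuity yields one of them, `V`, with `φ (1 - 1_V) < ε`.
-/

open TopologicalSpace

namespace TopologicalSpace.Clopens

variable {K : Type*} [TopologicalSpace K]

noncomputable def indicator (U : Clopens K) : C(K, ℝ) :=
  ⟨Set.indicator U 1, continuous_indicator (by simp [U.isClopen]) continuous_const.continuousOn⟩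

theorem indicator_of_mem {U : Clopens K} {k : K} (hk : k ∈ U) : U.indicator k = 1 :=
  Set.indicator_of_mem (SetLike.mem_coe.2 hk) _

theorem indicator_of_notMem {U : Clopens K} {k : K} (hk : k ∉ U) : U.indicator k = 0 :=
  Set.indicator_of_notMem (SetLike.mem_coe.not.2 hk) _

theorem indicator_mul_self (U : Clopens K) : U.indicator * U.indicator = U.indicator := by
  ext k
  by_cases hk : k ∈ U <;> simp [indicator_of_mem, indicator_of_notMem, hk]

theorem indicator_compl (U : Clopens K) : Uᶜ.indicator = 1 - U.indicator := by
  ext k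
  by_cases hk : k ∈ U
  · simp [indicator_of_mem hk, indicator_of_notMem (show k ∉ Uᶜ from not_not_intro hk)]
  · simp [indicator_of_notMem hk, indicator_of_mem (show k ∈ Uᶜ from hk)]

theorem indicator_nonneg (U : Clopens K) : 0 ≤ U.indicator := fun k => by
  by_cases hk : k ∈ U <;> simp [indicator_of_mem, indicator_of_notMem, hk]

theorem indicator_le_one (U : Clopens K) : U.indicator ≤ 1 := fun k => by
  by_cases hk : k ∈ U <;> simp [indicator_of_mem, indicator_of_notMem, hk]

theorem indicator_mono : Monotone (indicator : Clopens K → C(K, ℝ)) := fun U V hUV k => by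
  by_cases hk : k ∈ U
  · simp [indicator_of_mem hk, indicator_of_mem (hUV hk)]
  · simpa [indicator_of_notMem hk] using indicator_nonneg V k

theorem isLUB_range_indicator {ι : Type*} {V : ι → Clopens K}
    (hV : Dense (⋃ i, (V i : Set K))) : IsLUB (Set.range fun i => (V i).indicator) 1 := by
  refine ⟨Set.forall_mem_range.2 fun i => (V i).indicator_le_one, fun g hg => ?_⟩
  have hclosed : IsClosed {k | 1 ≤ g k} := isClosed_le continuous_const g.continuous
  have hsub : (⋃ i, (V i : Set K)) ⊆ {k | 1 ≤ g k} := Set.iUnion_subset fun i k hk => by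
    simpa [indicator_of_mem hk] using hg ⟨i, rfl⟩ k
  exact fun k => hclosed.closure_subset_iff.2 hsub (hV k)

theorem le_smul_one_add_smul_indicator_compl {f : C(K, ℝ)} {U : Clopens K} {δ M : ℝ}
    (hδ : 0 ≤ δ) (hU : ∀ k ∈ U, f k ≤ δ) (hM : ∀ k, f k ≤ M) :
    f ≤ δ • 1 + M • Uᶜ.indicator := fun k => by
  change f k ≤ δ * 1 + M * Uᶜ.indicator k
  by_cases hk : k ∈ U
  · simpa [indicator_of_notMem (show k ∉ Uᶜ from not_not_intro hk)] using hU k hk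
  · simpa [indicator_of_mem (show k ∈ Uᶜ from hk)] using add_le_add hδ (hM k)

end TopologicalSpace.Clopens

theorem tendsto_indicator_of_tendsto_idempotent {K Y : Type*} [TopologicalSpace K]
    [TopologicalSpace Y] {f : C(K, ℝ) → Y}
    (hf : ∀ S : Set C(K, ℝ), (∀ e ∈ S, e * e = e) → S.Nonempty → DirectedOn (· ≤ ·) S →
      IsLUB S 1 → Tendsto (fun e : S => f e) atTop (𝓝 (f 1)))
    {ι : Type*} [Preorder ι] [IsDirectedOrder ι] [Nonempty ι] {V : ι → Clopens K}
    (hV : Monotone V) (hdense : Dense (⋃ i, (V i : Set K))) :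
    Tendsto (fun i => f (V i).indicator) atTop (𝓝 (f 1)) := by
  set S := Set.range fun i => (V i).indicator
  have hS := hf S (Set.forall_mem_range.2 fun i => (V i).indicator_mul_self)
    (Set.range_nonempty _) (directedOn_range.2 (Clopens.indicator_mono.comp hV).directed_le)
    (Clopens.isLUB_range_indicator hdense)
  refine hS.comp (tendsto_atTop_atTop_of_monotone (f := fun i => (⟨(V i).indicator, i, rfl⟩ : S))
    (fun i j hij => Clopens.indicator_mono (hV hij)) ?_)
  rintro ⟨_, i, rfl⟩
  exact ⟨i, le_rfl⟩

section ExtremallyDisconnected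

variable {K : Type*} [TopologicalSpace K] [ExtremallyDisconnected K]

theorem IsClosed.isClopen_interior {C : Set K} (hC : IsClosed C) : IsClopen (interior C) := by
  rw [← compl_compl C, interior_compl]
  exact IsClopen.compl ⟨isClosed_closure, ExtremallyDisconnected.open_closure _ hC.isOpen_compl⟩

theorem dense_biUnion_sub_lt_of_isLUB {S : Set C(K, ℝ)} {b : C(K, ℝ)} (hb : IsLUB S b)
    {δ : ℝ} (hδ : 0 < δ) : Dense (⋃ a ∈ S, {k | (b - a) k < δ}) := by
  set C := ⋂ a ∈ S, {k | δ ≤ (b - a) k}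
  have hC : IsClosed C :=
    isClosed_biInter fun a _ => isClosed_le continuous_const (b - a).continuous
  have hcompl : (⋃ a ∈ S, {k | (b - a) k < δ}) = Cᶜ := by
    simp only [C, Set.compl_iInter, Set.compl_ofPred, not_le]
  rw [hcompl, ← interior_eq_empty_iff_dense_compl, Set.eq_empty_iff_forall_notMem]
  intro k hk
  let W : Clopens K := ⟨interior C, hC.isClopen_interior⟩
  have hub : b - δ • W.indicator ∈ upperBounds S := fun a ha j => by
    change a j ≤ (b - δ • W.indicator) j
    by_cases hj : j ∈ W
    · have hjC : δ ≤ (b - a) j := Set.mem_iInter₂.1 (interior_subset hj) a ha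
      simp only [ContinuousMap.sub_apply, ContinuousMap.smul_apply, Clopens.indicator_of_mem hj,
        smul_eq_mul, mul_one] at hjC ⊢
      linarith
    · simpa [Clopens.indicator_of_notMem hj] using hb.1 ha j
  have hbk : b k ≤ (b - δ • W.indicator) k := hb.2 hub k
  simp only [ContinuousMap.sub_apply, ContinuousMap.smul_apply,
    Clopens.indicator_of_mem (show k ∈ W from hk), smul_eq_mul, mul_one] at hbk
  linarith

end ExtremallyDisconnected

namespace PositiveLinearMap

variable {K : Type*} [TopologicalSpace K] [CompactSpace K] [ExtremallyDisconnected K]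
  (φ : C(K, ℝ) →ₚ[ℝ] ℝ)
  (hφ : ∀ S : Set C(K, ℝ), (∀ e ∈ S, e * e = e) → S.Nonempty → DirectedOn (· ≤ ·) S →
    IsLUB S 1 → Tendsto (fun e : S => φ e) atTop (𝓝 (φ 1)))
  {S : Set C(K, ℝ)} (hne : S.Nonempty) (hdir : DirectedOn (· ≤ ·) S) {b : C(K, ℝ)}
  (hb : IsLUB S b)
include hφ hne hdir hb

theorem exists_le_add_of_isLUB {δ : ℝ} (hδ : 0 < δ) :
    ∃ a ∈ S, φ b ≤ φ a + δ * (φ 1 + 1) := by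
  obtain ⟨a₀, ha₀⟩ := hne
  have : Nonempty S := ⟨⟨a₀, ha₀⟩⟩
  have := hdir.isDirectedOrder
  let V : S → Clopens K := fun a => ⟨interior {k | (b - a) k ≤ δ},
    (isClosed_le (b - a).continuous continuous_const).isClopen_interior⟩
  have hV : Monotone V := fun a a' h =>
    interior_mono fun k (hk : (b - a) k ≤ δ) => (sub_le_sub_left (h k) (b k)).trans hk
  have hdense : Dense (⋃ a, (V a : Set K)) :=
    (dense_biUnion_sub_lt_of_isLUB hb hδ).mono <| Set.iUnion₂_subset fun a ha =>
      (interior_maximal (fun k hk => le_of_lt hk)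
        (isOpen_lt (b - a).continuous continuous_const)).trans
        (Set.subset_iUnion (fun a : S => (V a : Set K)) ⟨a, ha⟩)
  set M := ‖b - a₀‖
  have hlim : Tendsto (fun a : S => M * (φ 1 - φ (V a).indicator)) atTop (𝓝 0) := by
    simpa using
      ((tendsto_indicator_of_tendsto_idempotent hφ hV hdense).const_sub (φ 1)).const_mul M
  obtain ⟨a, ha₀a, hsmall⟩ :=
    ((eventually_ge_atTop ⟨a₀, ha₀⟩).and (hlim.eventually (gt_mem_nhds hδ))).exists
  have hbound : b - a ≤ δ • 1 + M • (V a)ᶜ.indicator :=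
    Clopens.le_smul_one_add_smul_indicator_compl hδ.le
      (fun k hk => interior_subset (s := {k | (b - a) k ≤ δ}) hk) fun k =>
        calc (b - a) k ≤ (b - a₀) k := sub_le_sub_left (ha₀a k) (b k)
          _ ≤ M := (le_abs_self _).trans ((b - a₀).norm_coe_le_norm k)
  have hφbound := OrderHomClass.mono φ hbound
  simp only [map_sub, map_add, map_smul, Clopens.indicator_compl, smul_eq_mul] at hφbound
  exact ⟨a, a.2, by linarith⟩

theorem isLUB_image_of_isLUB : IsLUB (φ '' S) (φ b) := by
  refine ⟨(OrderHomClass.mono φ).mem_upperBounds_image hb.1,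
    fun c hc => le_of_forall_pos_le_add fun ε hε => ?_⟩
  have hφ1 : 0 < φ 1 + 1 := by linarith [map_nonneg φ (zero_le_one : (0 : C(K, ℝ)) ≤ 1)]
  obtain ⟨a, ha, hba⟩ := exists_le_add_of_isLUB φ hφ hne hdir hb (div_pos hε hφ1)
  rw [div_mul_cancel₀ _ hφ1.ne'] at hba
  linarith [hc ⟨a, ha, rfl⟩]

end PositiveLinearMap

theorem LinearMap.exists_apply_lt_of_isLUB_image {K : Type*} [TopologicalSpace K]
    [RegularSpace K] [ExtremallyDisconnected K] (φ : C(K, ℝ) →ₗ[ℝ] ℝ)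
    (hφ : ∀ S : Set C(K, ℝ), S.Nonempty → DirectedOn (· ≤ ·) S → ∀ b, IsLUB S b →
      IsLUB (φ '' S) (φ b))
    {D : Set K} (hD : IsClosed D) (hDint : interior D = ∅) {ε : ℝ} (hε : 0 < ε) :
    ∃ a : C(K, ℝ), 0 ≤ a ∧ a ≤ 1 ∧ (∀ k ∈ D, a k = 1) ∧ φ a < ε := by
  let 𝒱 := {V : Clopens K // Disjoint (V : Set K) D}
  have : Nonempty 𝒱 := ⟨⟨⊥, Set.empty_disjoint D⟩⟩
  have hdense : Dense (⋃ V : 𝒱, (V.1 : Set K)) := by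
    refine (interior_eq_empty_iff_dense_compl.1 hDint).mono fun k hk => ?_
    obtain ⟨t, ht, htc, htD⟩ := exists_mem_nhds_isClosed_subset (hD.isOpen_compl.mem_nhds hk)
    exact Set.mem_iUnion.2 ⟨⟨⟨interior t, htc.isClopen_interior⟩,
      Set.subset_compl_iff_disjoint_right.1 (interior_subset.trans htD)⟩,
      mem_interior_iff_mem_nhds.2 ht⟩
  have hdir : Directed (· ≤ ·) fun V : 𝒱 => V.1.indicator := by
    rintro ⟨V, hV⟩ ⟨W, hW⟩
    exact ⟨⟨V ⊔ W, Set.disjoint_union_left.2 ⟨hV, hW⟩⟩, Clopens.indicator_mono le_sup_left,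
      Clopens.indicator_mono le_sup_right⟩
  obtain ⟨_, ⟨_, ⟨⟨V, hVD⟩, rfl⟩, rfl⟩, hlt, -⟩ :=
    (hφ _ (Set.range_nonempty _) (directedOn_range.2 hdir) 1
      (Clopens.isLUB_range_indicator hdense)).exists_between (sub_lt_self (φ 1) hε)
  refine ⟨Vᶜ.indicator, Vᶜ.indicator_nonneg, Vᶜ.indicator_le_one,
    fun k hk => Clopens.indicator_of_mem (hVD.notMem_of_mem_right hk), ?_⟩
  rw [Clopens.indicator_compl, map_sub]
  linarith

theorem stmt14_general {K X : Type*} [TopologicalSpace K] [CompactSpace K] [T2Space K]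
    [ExtremallyDisconnected K]
    [NormedAddCommGroup X] [NormedSpace ℝ X] [CompleteSpace X]
    (m : C(K, ℝ) →ₐ[ℝ] (X →L[ℝ] X))
    (hBade : BadeComplete m)
    (x : X) (x' : X →L[ℝ] ℝ)
    (hpos : ∀ a : C(K, ℝ), 0 ≤ a → 0 ≤ x' (m a x)) :
    (∀ S : Set C(K, ℝ), S.Nonempty → DirectedOn (· ≤ ·) S → ∀ b : C(K, ℝ), IsLUB S b →
      Filter.Tendsto (fun a : S => x' (m (a : C(K, ℝ)) x)) Filter.atTop
        (nhds (x' (m b x)))) ∧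
    (∀ D : Set K, IsClosed D → interior D = ∅ → ∀ ε > (0 : ℝ), ∃ a : C(K, ℝ),
      0 ≤ a ∧ a ≤ 1 ∧ (∀ k ∈ D, a k = 1) ∧ x' (m a x) < ε) := by
  let φ : C(K, ℝ) →ₚ[ℝ] ℝ := PositiveLinearMap.mk₀
    ((x' : X →ₗ[ℝ] ℝ) ∘ₗ (ContinuousLinearMap.apply ℝ X x : (X →L[ℝ] X) →ₗ[ℝ] X) ∘ₗ
      m.toLinearMap) hpos
  have hlub : ∀ S : Set C(K, ℝ), S.Nonempty → DirectedOn (· ≤ ·) S → ∀ b, IsLUB S b →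
      IsLUB (φ '' S) (φ b) := fun S hne hdir b hb =>
    φ.isLUB_image_of_isLUB (fun S hidem hne hdir hS =>
      (x'.continuous.tendsto _).comp (hBade S hidem hne hdir 1 (one_mul 1) hS x)) hne hdir hb
  refine ⟨fun S hne hdir b hb => ?_, fun D hD hDint ε hε => ?_⟩
  · exact tendsto_atTop_isLUB (fun a a' h => OrderHomClass.mono φ h)
      (Set.image_eq_range φ S ▸ hlub S hne hdir b hb)
  · exact (φ : C(K, ℝ) →ₗ[ℝ] ℝ).exists_apply_lt_of_isLUB_image hlub hD hDint hε

/-- If `K` is Stonian and the idempotents are Bade complete on `X`, then every positive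
functional `a ↦ x'(m a x)` is order continuous; in particular it vanishes on every
closed nowhere dense subset `D` of `K` (the measure of `D` is `0`, expressed by outer
regularity via continuous functions equal to `1` on `D`). -/
theorem stmt14 {K X : Type*} [TopologicalSpace K] [CompactSpace K] [T2Space K]
    [ExtremallyDisconnected K]
    [NormedAddCommGroup X] [NormedSpace ℝ X] [CompleteSpace X]
    (m : C(K, ℝ) →ₐ[ℝ] (X →L[ℝ] X))
    (hm : ∀ a : C(K, ℝ), ‖m a‖ = ‖a‖)
    (hBade : BadeComplete m)
    (x : X) (x' : X →L[ℝ] ℝ)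
    (hpos : ∀ a : C(K, ℝ), 0 ≤ a → 0 ≤ x' (m a x)) :
    (∀ S : Set C(K, ℝ), S.Nonempty → DirectedOn (· ≤ ·) S → ∀ b : C(K, ℝ), IsLUB S b →
      Filter.Tendsto (fun a : S => x' (m (a : C(K, ℝ)) x)) Filter.atTop
        (nhds (x' (m b x)))) ∧
    (∀ D : Set K, IsClosed D → interior D = ∅ → ∀ ε > (0 : ℝ), ∃ a : C(K, ℝ),
      0 ≤ a ∧ a ≤ 1 ∧ (∀ k ∈ D, a k = 1) ∧ x' (m a x) < ε) :=
  stmt14_general m hBade x x' hpos
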